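/- For real α > 0, β > 0 and every real y, ∫₀^∞ (e^{ixy} − 1 − ixy)·e^{−αβx}/(1−e^{−βx}) dx = −(1/β)[ψ(α − iy/β) − ψ(α)] − (iy/β²)·ψ'(α), where ψ is the digamma function. -/

import Mathlib

open Real Complex

/-- The digamma function `ψ = Γ'/Γ`. -/
noncomputable def digamma (x : ℂ) : ℂ := deriv Complex.Gamma x / Complex.Gamma x

/-!
Expanding `1 / (1 - e^{-βx}) = ∑ₙ e^{-nβx}` and integrating term by term, the integral becomes
`∑ₙ ∫₀^∞ (e^{ixy} - 1 - ixy) e^{-cₙx} dx = ∑ₙ (1/(cₙ - iy) - 1/cₙ - iy/cₙ²)` with `cₙ = (α + n)β`;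
the interchange is justified by `|e^{it} - 1 - it| ≤ 2t²`, which makes `∑ₙ ∫ |termₙ| ≤ ∑ₙ 4y²/cₙ³`
finite. The right-hand side has the same expansion by the series
`ψ(z) = -γ + ∑ₙ (1/(n+1) - 1/(n+z))` and `ψ'(z) = ∑ₙ 1/(n+z)²` (for `0 < re z`). The series for `ψ`
is first proved for real `x > 0`, from `ψ(x+1) = ψ(x) + 1/x`, `ψ(n+1) = -γ + H_n` and the
monotonicity of `ψ` (log-convexity of `Γ`), and then extended to the half-plane by the identity
theorem; `ψ'` is obtained by differentiating the locally uniformly convergent series.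
-/

open Filter Topology Set MeasureTheory
open Finset (range sum_range_succ)

lemma Complex.ne_neg_natCast_of_re_pos {s : ℂ} (hs : 0 < s.re) (m : ℕ) : s ≠ -m := by
  rintro rfl
  simp only [neg_re, natCast_re, Left.neg_pos_iff] at hs
  exact m.cast_nonneg.not_gt hs

lemma Complex.digamma_ofReal {x : ℝ} (hx : 0 < x) :
    Complex.digamma x = logDeriv Real.Gamma x := by
  have hreal : HasDerivAt (fun t : ℝ => (Real.Gamma t : ℂ)) ((deriv Real.Gamma x : ℝ) : ℂ) x :=
    (Real.differentiableOn_Gamma_Ioi.differentiableAt (Ioi_mem_nhds hx)).hasDerivAt.ofReal_comp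
  have hcomplex : HasDerivAt (fun t : ℝ => (Real.Gamma t : ℂ)) (deriv Complex.Gamma x) x := by
    have hdiff := Complex.differentiableAt_Gamma x (ne_neg_natCast_of_re_pos (by simpa using hx))
    simpa only [Complex.Gamma_ofReal] using hdiff.hasDerivAt.comp_ofReal
  rw [Complex.digamma_def, logDeriv_apply, logDeriv_apply, hcomplex.unique hreal,
    Complex.Gamma_ofReal, Complex.ofReal_div]

namespace Real

local notation "ψ" => logDeriv Real.Gamma

lemma logDeriv_Gamma_add_one {x : ℝ} (hx : 0 < x) : ψ (x + 1) = ψ x + x⁻¹ := by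
  have h := Complex.digamma_apply_add_one x (Complex.ne_neg_natCast_of_re_pos (by simpa using hx))
  rw [← Complex.ofReal_one, ← Complex.ofReal_add, Complex.digamma_ofReal (by positivity),
    Complex.digamma_ofReal hx] at h
  exact_mod_cast h

lemma logDeriv_Gamma_add_nat {x : ℝ} (hx : 0 < x) (n : ℕ) :
    ψ (x + n) = ψ x + ∑ k ∈ range n, (x + k)⁻¹ := by
  induction n with
  | zero => simp
  | succ n ih =>
    rw [Nat.cast_succ, ← add_assoc, logDeriv_Gamma_add_one (by positivity), ih, sum_range_succ,
      add_assoc]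

lemma logDeriv_Gamma_nat_add_one (n : ℕ) :
    ψ (n + 1) = -eulerMascheroniConstant + harmonic n := by
  rw [logDeriv_apply, deriv_Gamma_nat, Gamma_nat_eq_factorial,
    mul_div_cancel_left₀ _ (by positivity)]

lemma monotoneOn_logDeriv_Gamma : MonotoneOn ψ (Ioi 0) := by
  have hdiff {x : ℝ} (hx : x ∈ Ioi 0) : DifferentiableAt ℝ Real.Gamma x :=
    differentiableOn_Gamma_Ioi.differentiableAt (Ioi_mem_nhds hx)
  have hlog : EqOn (deriv (log ∘ Real.Gamma)) ψ (Ioi 0) := fun x hx =>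
    deriv_log_comp_eq_logDeriv (hdiff hx) (Gamma_pos_of_pos hx).ne'
  refine (convexOn_log_Gamma.monotoneOn_deriv fun x hx => ?_).congr hlog
  exact (hdiff hx).log (Gamma_pos_of_pos hx).ne'

lemma tendsto_logDeriv_Gamma_nat_add_one_sub {x : ℝ} (hx : 0 < x) :
    Tendsto (fun n : ℕ => ψ (n + 1) - ψ (x + n)) atTop (𝓝 0) := by
  obtain ⟨m, hxm⟩ : ∃ m : ℕ, x + 1 ≤ m := ⟨⌈x + 1⌉₊, Nat.le_ceil _⟩
  -- `n + 1` and `x + n` both lie in `[n, n + m]`, over which `ψ` increases by at most `m / n`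
  refine squeeze_zero_norm' ?_ (tendsto_const_div_atTop_nhds_zero_nat (m : ℝ))
  filter_upwards [eventually_ge_atTop 1] with n hn
  have hn : (1 : ℝ) ≤ n := by exact_mod_cast hn
  have hgap : ψ (n + m) - ψ n ≤ m / n := by
    rw [logDeriv_Gamma_add_nat (by positivity) m, add_sub_cancel_left]
    calc ∑ k ∈ range m, ((n : ℝ) + k)⁻¹ ≤ ∑ _k ∈ range m, (n : ℝ)⁻¹ :=
          Finset.sum_le_sum fun k _ => inv_anti₀ (by positivity) (by simp)
      _ = m / n := by simp [div_eq_mul_inv]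
  have hmono {a b : ℝ} (ha : (n : ℝ) ≤ a) (hab : a ≤ b) : ψ a ≤ ψ b :=
    monotoneOn_logDeriv_Gamma (by simp only [mem_Ioi]; linarith)
      (by simp only [mem_Ioi]; linarith) hab
  have h₁ := hmono le_rfl (show (n : ℝ) ≤ n + 1 by linarith)
  have h₂ := hmono (show (n : ℝ) ≤ n + 1 by linarith) (show (n : ℝ) + 1 ≤ n + m by linarith)
  have h₃ := hmono le_rfl (show (n : ℝ) ≤ x + n by linarith)
  have h₄ := hmono (show (n : ℝ) ≤ x + n by linarith) (show x + n ≤ n + m by linarith)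
  rw [Real.norm_eq_abs, abs_sub_le_iff]
  constructor <;> linarith

lemma tendsto_sum_range_inv_sub_inv {x : ℝ} (hx : 0 < x) :
    Tendsto (fun n : ℕ => ∑ k ∈ range n, (((k : ℝ) + 1)⁻¹ - ((k : ℝ) + x)⁻¹)) atTop
      (𝓝 (ψ x + eulerMascheroniConstant)) := by
  have hpartial (n : ℕ) : ∑ k ∈ range n, (((k : ℝ) + 1)⁻¹ - ((k : ℝ) + x)⁻¹)
      = ψ x + eulerMascheroniConstant + (ψ (n + 1) - ψ (x + n)) := by
    rw [logDeriv_Gamma_nat_add_one, logDeriv_Gamma_add_nat hx, harmonic, Finset.sum_sub_distrib]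
    push_cast
    simp_rw [add_comm x]
    ring
  simpa [hpartial] using (tendsto_logDeriv_Gamma_nat_add_one_sub hx).const_add
    (ψ x + eulerMascheroniConstant)

end Real

lemma summable_inv_natCast_add_pow {a : ℝ} (ha : 0 < a) {k : ℕ} (hk : 1 < k) :
    Summable fun n : ℕ => (((n : ℝ) + a) ^ k)⁻¹ :=
  ((Real.summable_one_div_nat_add_rpow a k).mpr (by exact_mod_cast hk)).congr fun n => by
    rw [abs_of_pos (by positivity), Real.rpow_natCast, one_div]

namespace Complex

lemma natCast_add_ne_zero_of_re_pos {z : ℂ} (hz : 0 < z.re) (n : ℕ) : (n : ℂ) + z ≠ 0 := by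
  rw [add_comm, ← sub_neg_eq_add, sub_ne_zero]
  exact ne_neg_natCast_of_re_pos hz n

lemma norm_inv_natCast_add_le {z : ℂ} {c : ℝ} (hc : 0 < c) (hcz : c ≤ z.re) (n : ℕ) :
    ‖((n : ℂ) + z)⁻¹‖ ≤ ((n : ℝ) + c)⁻¹ := by
  rw [norm_inv]
  refine inv_anti₀ (by positivity) ((add_le_add_right hcz _).trans ?_)
  simpa using re_le_norm ((n : ℂ) + z)

lemma norm_inv_natCast_add_sub_inv_le {z w : ℂ} {c : ℝ} (hc : 0 < c) (hz : c ≤ z.re)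
    (hw : c ≤ w.re) (n : ℕ) :
    ‖((n : ℂ) + z)⁻¹ - ((n : ℂ) + w)⁻¹‖ ≤ ‖w - z‖ * (((n : ℝ) + c) ^ 2)⁻¹ := by
  rw [inv_sub_inv' (natCast_add_ne_zero_of_re_pos (hc.trans_le hz) n)
    (natCast_add_ne_zero_of_re_pos (hc.trans_le hw) n), add_sub_add_left_eq_sub, norm_mul,
    norm_mul]
  calc ‖((n : ℂ) + z)⁻¹‖ * ‖w - z‖ * ‖((n : ℂ) + w)⁻¹‖
      ≤ ((n : ℝ) + c)⁻¹ * ‖w - z‖ * ((n : ℝ) + c)⁻¹ := by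
        refine mul_le_mul (mul_le_mul_of_nonneg_right ?_ (norm_nonneg _)) ?_ (norm_nonneg _)
          (by positivity)
        exacts [norm_inv_natCast_add_le hc hz n, norm_inv_natCast_add_le hc hw n]
    _ = ‖w - z‖ * (((n : ℝ) + c) ^ 2)⁻¹ := by rw [← inv_pow]; ring

lemma summable_inv_natCast_add_sub_inv {z w : ℂ} (hz : 0 < z.re) (hw : 0 < w.re) :
    Summable fun n : ℕ => ((n : ℂ) + z)⁻¹ - ((n : ℂ) + w)⁻¹ :=
  .of_norm_bounded ((summable_inv_natCast_add_pow (lt_min hz hw) one_lt_two).mul_left ‖w - z‖)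
    (norm_inv_natCast_add_sub_inv_le (lt_min hz hw) (min_le_left _ _) (min_le_right _ _))

lemma hasDerivAt_inv_natCast_add_one_sub_inv {z : ℂ} (n : ℕ) (hz : (n : ℂ) + z ≠ 0) :
    HasDerivAt (fun w : ℂ => ((n : ℂ) + 1)⁻¹ - ((n : ℂ) + w)⁻¹) (((n : ℂ) + z) ^ 2)⁻¹ z := by
  simpa [neg_div, one_div] using (((hasDerivAt_id z).const_add (n : ℂ)).inv hz).const_sub
    ((n : ℂ) + 1)⁻¹

noncomputable def digammaSeries (z : ℂ) : ℂ :=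
  -eulerMascheroniConstant + ∑' n : ℕ, (((n : ℂ) + 1)⁻¹ - ((n : ℂ) + z)⁻¹)

lemma exists_isOpen_dominated_digammaSeries {z : ℂ} (hz : 0 < z.re) :
    ∃ U : Set ℂ, IsOpen U ∧ z ∈ U ∧ (∀ w ∈ U, 0 < w.re) ∧ ∃ u : ℕ → ℝ, Summable u ∧
      ∀ n : ℕ, ∀ w ∈ U, ‖((n : ℂ) + 1)⁻¹ - ((n : ℂ) + w)⁻¹‖ ≤ u n := by
  set c := min 1 (z.re / 2)
  have hc : 0 < c := lt_min one_pos (half_pos hz)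
  refine ⟨{w | c < w.re ∧ ‖w‖ < ‖z‖ + 1},
    (isOpen_lt continuous_const continuous_re).inter (isOpen_lt continuous_norm continuous_const),
    ⟨(min_le_right _ _).trans_lt (half_lt_self hz), lt_add_one _⟩,
    fun w hw => hc.trans hw.1,
    _, (summable_inv_natCast_add_pow hc one_lt_two).mul_left (‖z‖ + 2), fun n w hw => ?_⟩
  have hc1 : c ≤ (1 : ℂ).re := by rw [one_re]; exact min_le_left _ _
  refine (norm_inv_natCast_add_sub_inv_le hc hc1 hw.1.le n).trans ?_
  gcongr
  calc ‖w - 1‖ ≤ ‖w‖ + ‖(1 : ℂ)‖ := norm_sub_le _ _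
    _ ≤ ‖z‖ + 2 := by rw [norm_one]; linarith [hw.2]

lemma differentiableAt_digammaSeries {z : ℂ} (hz : 0 < z.re) :
    DifferentiableAt ℂ digammaSeries z := by
  obtain ⟨U, hU, hzU, hUre, u, hu, hle⟩ := exists_isOpen_dominated_digammaSeries hz
  refine ((differentiableOn_tsum_of_summable_norm hu (fun n w hw => ?_) hU hle).const_add
    _).differentiableAt (hU.mem_nhds hzU)
  exact (hasDerivAt_inv_natCast_add_one_sub_inv n
    (natCast_add_ne_zero_of_re_pos (hUre w hw) n)).differentiableAt.differentiableWithinAt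

lemma hasSum_deriv_digammaSeries {z : ℂ} (hz : 0 < z.re) :
    HasSum (fun n : ℕ => (((n : ℂ) + z) ^ 2)⁻¹) (deriv digammaSeries z) := by
  obtain ⟨U, hU, hzU, hUre, u, hu, hle⟩ := exists_isOpen_dominated_digammaSeries hz
  have hderiv {w : ℂ} (hw : w ∈ U) (n : ℕ) := hasDerivAt_inv_natCast_add_one_sub_inv n
    (natCast_add_ne_zero_of_re_pos (hUre w hw) n)
  have h := hasSum_deriv_of_summable_norm hu
    (fun n w hw => (hderiv hw n).differentiableAt.differentiableWithinAt) hU hle hzU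
  simp only [(hderiv hzU _).deriv] at h
  unfold digammaSeries
  rwa [deriv_const_add]

lemma digammaSeries_ofReal {x : ℝ} (hx : 0 < x) :
    digammaSeries x = logDeriv Real.Gamma x := by
  have hseries := (summable_inv_natCast_add_sub_inv (z := 1) (w := x) (by simp)
    (by simpa using hx)).hasSum.tendsto_sum_nat
  have hreal := (Real.tendsto_sum_range_inv_sub_inv hx).ofReal
  push_cast at hreal
  rw [digammaSeries, tendsto_nhds_unique hseries hreal]
  ring

lemma analyticOnNhd_digamma : AnalyticOnNhd ℂ Complex.digamma {z | 0 < z.re} := by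
  have hU : IsOpen {z : ℂ | 0 < z.re} := isOpen_lt continuous_const continuous_re
  have hGamma : AnalyticOnNhd ℂ Gamma {z | 0 < z.re} :=
    DifferentiableOn.analyticOnNhd (fun z hz =>
      (differentiableAt_Gamma z (ne_neg_natCast_of_re_pos hz)).differentiableWithinAt) hU
  rw [digamma_def]
  exact hGamma.deriv.div hGamma fun z hz => Gamma_ne_zero_of_re_pos hz

lemma digamma_eqOn_digammaSeries : EqOn Complex.digamma digammaSeries {z | 0 < z.re} := by
  have hU : IsOpen {z : ℂ | 0 < z.re} := isOpen_lt continuous_const continuous_re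
  have hseries : AnalyticOnNhd ℂ digammaSeries {z | 0 < z.re} :=
    DifferentiableOn.analyticOnNhd (fun z hz =>
      (differentiableAt_digammaSeries hz).differentiableWithinAt) hU
  have hofReal : Tendsto ((↑) : ℝ → ℂ) (𝓝[≠] 1) (𝓝[≠] 1) := by
    rw [tendsto_nhdsWithin_iff]
    exact ⟨tendsto_nhdsWithin_of_tendsto_nhds continuous_ofReal.continuousAt,
      eventually_nhdsWithin_iff.mpr (Eventually.of_forall fun t ht => ofReal_ne_one.mpr ht)⟩
  refine analyticOnNhd_digamma.eqOn_of_preconnected_of_frequently_eq hseries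
    (convex_halfSpace_re_gt 0).isPreconnected (by simp) (hofReal.frequently ?_)
  refine ((Eventually.filter_mono nhdsWithin_le_nhds) ?_).frequently
  filter_upwards [eventually_gt_nhds one_pos] with x hx
  rw [digamma_ofReal hx, digammaSeries_ofReal hx]

lemma hasSum_digamma_sub_digamma {z w : ℂ} (hz : 0 < z.re) (hw : 0 < w.re) :
    HasSum (fun n : ℕ => ((n : ℂ) + w)⁻¹ - ((n : ℂ) + z)⁻¹)
      (Complex.digamma z - Complex.digamma w) := by
  have h := (summable_inv_natCast_add_sub_inv (z := 1) one_pos hz).hasSum.sub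
    (summable_inv_natCast_add_sub_inv (z := 1) one_pos hw).hasSum
  rw [digamma_eqOn_digammaSeries hz, digamma_eqOn_digammaSeries hw, digammaSeries, digammaSeries,
    add_sub_add_left_eq_sub]
  simpa only [sub_sub_sub_cancel_left] using h

lemma hasSum_deriv_digamma {z : ℂ} (hz : 0 < z.re) :
    HasSum (fun n : ℕ => (((n : ℂ) + z) ^ 2)⁻¹) (deriv Complex.digamma z) := by
  rw [(eventuallyEq_of_mem ((isOpen_lt continuous_const continuous_re).mem_nhds hz)
    digamma_eqOn_digammaSeries).deriv_eq]
  exact hasSum_deriv_digammaSeries hz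

end Complex

lemma norm_exp_I_mul_ofReal_sub_one_sub_le (t : ℝ) :
    ‖cexp (I * t) - 1 - I * t‖ ≤ 2 * t ^ 2 := by
  have hnorm : ‖I * t‖ = |t| := by simp
  rcases le_or_gt |t| 1 with ht | ht
  · have h := norm_exp_sub_one_sub_id_le (x := I * t) (by rwa [hnorm])
    rw [hnorm, sq_abs] at h
    linarith [sq_nonneg t]
  · calc ‖cexp (I * t) - 1 - I * t‖ ≤ ‖cexp (I * t) - 1‖ + ‖I * t‖ := norm_sub_le _ _
      _ ≤ |t| + |t| := by rw [hnorm]; gcongr; exact norm_exp_I_mul_ofReal_sub_one_le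
      _ ≤ 2 * t ^ 2 := by nlinarith [sq_abs t]

lemma integrableOn_pow_mul_exp_neg_mul (k : ℕ) {r : ℝ} (hr : 0 < r) :
    IntegrableOn (fun x : ℝ => x ^ k * rexp (-(r * x))) (Ioi 0) := by
  refine (integrableOn_rpow_mul_exp_neg_mul_rpow (s := k) (p := 1)
    (neg_one_lt_zero.trans_le k.cast_nonneg) one_pos hr).congr_fun (fun x _ => ?_) measurableSet_Ioi
  simp [Real.rpow_natCast]

lemma integral_pow_mul_exp_neg_mul (k : ℕ) {r : ℝ} (hr : 0 < r) :
    ∫ x in Ioi 0, x ^ k * rexp (-(r * x)) = k.factorial / r ^ (k + 1) := by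
  have h := integral_rpow_mul_exp_neg_mul_Ioi (a := k + 1) (by positivity) hr
  simp only [add_sub_cancel_right, Real.rpow_natCast] at h
  rw [h, Real.Gamma_nat_eq_factorial, ← Nat.cast_add_one, Real.rpow_natCast, one_div, inv_pow]
  ring

lemma integrableOn_cexp_neg_mul {s : ℂ} (hs : 0 < s.re) :
    IntegrableOn (fun x : ℝ => cexp (-(s * x))) (Ioi 0) := by
  simpa only [neg_mul] using integrableOn_exp_mul_complex_Ioi (a := -s) (by simpa using hs) 0

lemma integral_cexp_neg_mul {s : ℂ} (hs : 0 < s.re) :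
    ∫ x in Ioi (0 : ℝ), cexp (-(s * x)) = s⁻¹ := by
  simpa only [neg_mul, ofReal_zero, mul_zero, Complex.exp_zero, neg_div, one_div, inv_neg, neg_neg]
    using integral_exp_mul_complex_Ioi (a := -s) (by simpa using hs) 0

lemma ofReal_mul_cexp_neg_mul (c x : ℝ) :
    (x : ℂ) * cexp (-(c * x)) = ((x ^ 1 * rexp (-(c * x)) : ℝ) : ℂ) := by
  push_cast
  ring_nf

lemma integral_exp_I_mul_sub_one_sub_mul_exp_neg_mul {c : ℝ} (hc : 0 < c) (y : ℝ) :
    ∫ x in Ioi (0 : ℝ), (cexp (I * x * y) - 1 - I * x * y) * cexp (-(c * x))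
      = ((c : ℂ) - I * y)⁻¹ - (c : ℂ)⁻¹ - I * y / (c : ℂ) ^ 2 := by
  have hc' : 0 < (c : ℂ).re := by simpa using hc
  have hcy : 0 < ((c : ℂ) - I * y).re := by simpa using hc
  have hsplit (x : ℝ) : (cexp (I * x * y) - 1 - I * x * y) * cexp (-(c * x))
      = cexp (-(((c : ℂ) - I * y) * x)) - cexp (-(c * x)) - I * y * (x * cexp (-(c * x))) := by
    rw [show -(((c : ℂ) - I * y) * x) = I * x * y + -(c * x) by ring, Complex.exp_add]
    ring
  have hx : IntegrableOn (fun x : ℝ => I * y * (x * cexp (-(c * x)))) (Ioi 0) := by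
    simp only [IntegrableOn, ofReal_mul_cexp_neg_mul]
    exact (integrableOn_pow_mul_exp_neg_mul 1 hc).ofReal.const_mul _
  have hexp : IntegrableOn (fun x : ℝ => cexp (-(((c : ℂ) - I * y) * x)) - cexp (-(c * x)))
      (Ioi 0) := (integrableOn_cexp_neg_mul hcy).sub (integrableOn_cexp_neg_mul hc')
  simp_rw [hsplit]
  rw [integral_sub hexp hx, integral_sub (integrableOn_cexp_neg_mul hcy)
    (integrableOn_cexp_neg_mul hc'), integral_const_mul, integral_cexp_neg_mul hcy,
    integral_cexp_neg_mul hc']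
  simp only [ofReal_mul_cexp_neg_mul, integral_complex_ofReal, integral_pow_mul_exp_neg_mul 1 hc]
  simp [div_eq_mul_inv]

lemma hasSum_exp_neg_natCast_add_mul {t : ℝ} (ht : 0 < t) (a : ℝ) :
    HasSum (fun n : ℕ => rexp (-((a + n) * t))) (rexp (-(a * t)) / (1 - rexp (-t))) := by
  have hq : rexp (-t) < 1 := Real.exp_lt_one_iff.mpr (neg_lt_zero.mpr ht)
  rw [div_eq_mul_inv]
  refine ((hasSum_geometric_of_lt_one (Real.exp_pos _).le hq).mul_left _).congr_fun fun n => ?_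
  rw [← Real.exp_nat_mul, ← Real.exp_add]
  ring_nf

lemma integral_mul_exp_div_one_sub_exp_eq_tsum {f : ℝ → ℂ} (hf : Continuous f) {C : ℝ}
    (hfC : ∀ x, ‖f x‖ ≤ C * x ^ 2) {α β : ℝ} (hα : 0 < α) (hβ : 0 < β) :
    ∫ x in Ioi (0 : ℝ), f x * cexp (-(α * β * x) : ℂ) / ((1 - rexp (-(β * x)) : ℝ) : ℂ)
      = ∑' n : ℕ, ∫ x in Ioi (0 : ℝ), f x * cexp (-(((α + n) * β : ℝ) * x)) := by
  set c : ℕ → ℝ := fun n => (α + n) * β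
  have hc (n : ℕ) : 0 < c n := by positivity
  have hbound (n : ℕ) (x : ℝ) :
      ‖f x * cexp (-(c n * x))‖ ≤ C * (x ^ 2 * rexp (-(c n * x))) := by
    rw [norm_mul, Complex.norm_exp, ← mul_assoc]
    refine mul_le_mul (hfC x) (le_of_eq ?_) (Real.exp_pos _).le (le_trans (norm_nonneg _) (hfC x))
    simp
  have hmajorant (n : ℕ) :
      IntegrableOn (fun x : ℝ => C * (x ^ 2 * rexp (-(c n * x)))) (Ioi 0) :=
    (integrableOn_pow_mul_exp_neg_mul 2 (hc n)).const_mul C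
  have hint (n : ℕ) : IntegrableOn (fun x : ℝ => f x * cexp (-(c n * x))) (Ioi 0) :=
    (hmajorant n).mono' (by fun_prop) (ae_of_all _ (hbound n))
  have hint_norm (n : ℕ) : ∫ x in Ioi 0, ‖f x * cexp (-(c n * x))‖
      ≤ 2 * C / β ^ 3 * (((n : ℝ) + α) ^ 3)⁻¹ := by
    calc ∫ x in Ioi 0, ‖f x * cexp (-(c n * x))‖
        ≤ ∫ x in Ioi 0, C * (x ^ 2 * rexp (-(c n * x))) :=
          integral_mono_of_nonneg (ae_of_all _ fun _ => norm_nonneg _) (hmajorant n)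
            (ae_of_all _ (hbound n))
      _ = 2 * C / β ^ 3 * (((n : ℝ) + α) ^ 3)⁻¹ := by
          rw [integral_const_mul, integral_pow_mul_exp_neg_mul 2 (hc n)]
          simp only [c]
          field_simp
          norm_num
          ring
  have hsummable : Summable fun n : ℕ => ∫ x in Ioi 0, ‖f x * cexp (-(c n * x))‖ :=
    .of_nonneg_of_le (fun n => integral_nonneg fun _ => norm_nonneg _) hint_norm
      ((summable_inv_natCast_add_pow hα (by norm_num : 1 < 3)).mul_left _)
  rw [integral_tsum_of_summable_integral_norm hint hsummable]
  refine setIntegral_congr_fun measurableSet_Ioi fun x hx => (HasSum.tsum_eq ?_).symm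
  have h := (Complex.hasSum_ofReal.mpr
    (hasSum_exp_neg_natCast_add_mul (mul_pos hβ hx) α)).mul_left (f x)
  rw [show (-(α * β * x) : ℂ) = ((-(α * (β * x)) : ℝ) : ℂ) by push_cast; ring, ← ofReal_exp,
    mul_div_assoc, ← ofReal_div]
  refine h.congr_fun fun n => ?_
  push_cast [c]
  ring_nf

lemma digamma_eq_complex_digamma : _root_.digamma = Complex.digamma :=
  funext fun _ => (logDeriv_apply _ _).symm

/-- For `α > 0`, `β > 0` and every real `y`,
`∫₀^∞ (e^{ixy}-1-ixy) e^{-αβx}/(1-e^{-βx}) dx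
 = -(1/β)[ψ(α-iy/β) - ψ(α)] - (iy/β²) ψ'(α)`. -/
theorem stmt12 (α β : ℝ) (hα : 0 < α) (hβ : 0 < β) (y : ℝ) :
    ∫ x in Set.Ioi (0 : ℝ),
      (Complex.exp (Complex.I * x * y) - 1 - Complex.I * x * y)
        * Complex.exp (-(α * β * x) : ℂ)
        / ((1 - Real.exp (-(β * x)) : ℝ) : ℂ)
    = -(1 / (β : ℂ)) * (_root_.digamma ((α : ℂ) - Complex.I * y / β) - _root_.digamma (α : ℂ))
      - Complex.I * y / (β : ℂ) ^ 2 * deriv _root_.digamma (α : ℂ) := by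
  have hE (x : ℝ) : ‖cexp (I * x * y) - 1 - I * x * y‖ ≤ 2 * y ^ 2 * x ^ 2 := by
    have h := norm_exp_I_mul_ofReal_sub_one_sub_le (x * y)
    push_cast at h
    rwa [← mul_assoc, mul_pow, mul_comm (x ^ 2), ← mul_assoc] at h
  have hα' : 0 < (α : ℂ).re := by simpa using hα
  have hαy : 0 < ((α : ℂ) - I * y / β).re := by simpa using hα
  rw [digamma_eq_complex_digamma, integral_mul_exp_div_one_sub_exp_eq_tsum (by fun_prop) hE hα hβ,
    tsum_congr fun n : ℕ => integral_exp_I_mul_sub_one_sub_mul_exp_neg_mul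
      (c := (α + n) * β) (by positivity) y]
  refine HasSum.tsum_eq ((((hasSum_digamma_sub_digamma hαy hα').mul_left _).sub
    ((hasSum_deriv_digamma hα').mul_left _)).congr_fun fun n => ?_)
  have hn : (n : ℂ) + α ≠ 0 := natCast_add_ne_zero_of_re_pos hα' n
  have hny : (n : ℂ) + (α - I * y / β) ≠ 0 := natCast_add_ne_zero_of_re_pos hαy n
  have hβ' : (β : ℂ) ≠ 0 := ofReal_ne_zero.mpr hβ.ne'
  have hc : (((α + n) * β : ℝ) : ℂ) = β * (n + α) := by push_cast; ring
  have hcy : (((α + n) * β : ℝ) : ℂ) - I * y = β * (n + (α - I * y / β)) := by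
    rw [hc]; field_simp; ring
  rw [hcy, hc]
  field_simp
  ring
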